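/- With a = i(x²−y²) and b = −y(y²/3 − x² − 1) − i(x(1 + y² − x²/3) + C − t), the polynomial |a|² + |b|² in (x,y) vanishes at some point (x,y) ∈ ℝ² if and only if t = C. -/

import Mathlib

open Complex

/-- a = i(x²−y²) -/
noncomputable def aMNV (x y : ℝ) : ℂ := Complex.I * ((x^2 - y^2 : ℝ) : ℂ)

/-- b = −y(y²/3 − x² − 1) − i(x(1 + y² − x²/3) + C − t) -/
noncomputable def bMNV (C t x y : ℝ) : ℂ :=
  ((-y*(y^2/3 - x^2 - 1) : ℝ) : ℂ) - Complex.I * ((x*(1 + y^2 - x^2/3) + C - t : ℝ) : ℂ)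

/-! On the zero set of `a`, i.e. `x² = y²`, the real part of `b` is `y (2y²/3 + 1)`,
which vanishes only at `y = 0`. Hence `a` and `b` vanish simultaneously only at the origin, where
`b = -i (C - t)`. -/

theorem aMNV_eq_zero_iff (x y : ℝ) : aMNV x y = 0 ↔ x ^ 2 = y ^ 2 := by
  simp only [aMNV, mul_eq_zero, I_ne_zero, ofReal_eq_zero, sub_eq_zero, false_or]

theorem bMNV_eq_zero_iff (C t x y : ℝ) :
    bMNV C t x y = 0 ↔
      y * (y ^ 2 / 3 - x ^ 2 - 1) = 0 ∧ x * (1 + y ^ 2 - x ^ 2 / 3) + C - t = 0 := by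
  simp only [bMNV, Complex.ext_iff, sub_re, sub_im, ofReal_re, ofReal_im, mul_re, mul_im, I_re,
    I_im, zero_re, zero_im]
  constructor <;> rintro ⟨hre, him⟩ <;> constructor <;> linarith

theorem eq_zero_of_sq_eq_of_mul_eq_zero {x y : ℝ} (hxy : x ^ 2 = y ^ 2)
    (hy : y * (y ^ 2 / 3 - x ^ 2 - 1) = 0) : x = 0 ∧ y = 0 := by
  have hy0 : y = 0 := by
    rcases mul_eq_zero.mp hy with h | h
    · exact h
    · nlinarith [sq_nonneg y]
  exact ⟨pow_eq_zero_iff two_ne_zero |>.mp (hxy.trans (by rw [hy0]; ring)), hy0⟩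

theorem mnv_denominator_vanishes_iff (C t : ℝ) :
    (∃ x y : ℝ, (‖aMNV x y‖)^2 + (‖bMNV C t x y‖)^2 = 0) ↔ t = C := by
  simp only [add_eq_zero_iff_of_nonneg (sq_nonneg (_ : ℝ)) (sq_nonneg (_ : ℝ)), sq_eq_zero_iff,
    norm_eq_zero, aMNV_eq_zero_iff, bMNV_eq_zero_iff]
  constructor
  · rintro ⟨x, y, hxy, hre, him⟩
    obtain ⟨rfl, rfl⟩ := eq_zero_of_sq_eq_of_mul_eq_zero hxy hre
    linarith
  · rintro rfl
    exact ⟨0, 0, by norm_num⟩
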